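/- For every integer n ≥ 2, the group of C-linear bijections g : B_n → B_n satisfying g(a·b) = g(a)·g(b) and (g(a)|g(b)) = (a|b) for all a, b ∈ B_n consists exactly of the identity map and the map σ. (This is the Griess-algebra form of the statement Aut(A(1/2, c¹_n)) = ⟨σ_e⟩ for n > 1.) -/

import Mathlib

open Matrix

/-- The basis vector `e` (the Ising vector) of the Griess algebra `B_n` of `A(1/2, c¹_n)`. -/
noncomputable def Be : Fin 3 → ℂ := ![1, 0, 0]

/-- The basis vector `f` of the Griess algebra `B_n`. -/
noncomputable def Bf : Fin 3 → ℂ := ![0, 1, 0]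

/-- The basis vector `x` of the Griess algebra `B_n`. -/
noncomputable def Bx : Fin 3 → ℂ := ![0, 0, 1]

/-- The commutative product of the Griess algebra `B_n` of `A(1/2, c¹_n)`, written in
coordinates with respect to the basis `{e, f, x}`: it is determined by
`e·e = 2e`, `f·f = 2f`, `e·f = 0`, `e·x = (1/2)x`, `f·x = (3/2)x`,
`x·x = 2n(n+6)e + 2(n+2)(n+4)f`. -/
noncomputable def Bmul (n : ℕ) (a b : Fin 3 → ℂ) : Fin 3 → ℂ :=
  ![2 * a 0 * b 0 + 2 * (n : ℂ) * ((n : ℂ) + 6) * a 2 * b 2,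
    2 * a 1 * b 1 + 2 * ((n : ℂ) + 2) * ((n : ℂ) + 4) * a 2 * b 2,
    (1 / 2) * (a 0 * b 2 + a 2 * b 0) + (3 / 2) * (a 1 * b 2 + a 2 * b 1)]

/-- The invariant symmetric bilinear form of the Griess algebra `B_n`, determined by
`(e|e) = 1/4`, `(f|f) = (3/4)(1 − 8/((n+2)(n+4)))`, `(x|x) = n(n+6)`,
`(e|f) = (e|x) = (f|x) = 0`. -/
noncomputable def Bform (n : ℕ) (a b : Fin 3 → ℂ) : ℂ :=
  (1 / 4) * a 0 * b 0 + (3 / 4) * (1 - 8 / (((n : ℂ) + 2) * ((n : ℂ) + 4))) * a 1 * b 1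
    + (n : ℂ) * ((n : ℂ) + 6) * a 2 * b 2

/-- The Virasoro vector `u = (1/(2(n+3)))(n e + (n+4) f + x)` of `B_n`. -/
noncomputable def Bu (n : ℕ) : Fin 3 → ℂ :=
  (1 / (2 * ((n : ℂ) + 3))) • ((n : ℂ) • Be + ((n : ℂ) + 4) • Bf + Bx)

/-- The Virasoro vector `v = e + f − u` of `B_n`. -/
noncomputable def Bv (n : ℕ) : Fin 3 → ℂ := Be + Bf - Bu n

/-- The involution `σ` of `B_n`: `σ(e) = e`, `σ(f) = f`, `σ(x) = −x`. -/
noncomputable def Bsigma : (Fin 3 → ℂ) → (Fin 3 → ℂ) := fun a => ![a 0, a 1, -a 2]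

/-!
An automorphism `g` maps idempotents (`a·a = 2a`) to idempotents of the same norm. The
idempotents of `B_n` are `0, e, f, e + f` and, with nonzero `x`-coordinate, `u, v, σu, σv`;
their norms are `c/2` for the central charges `0, 1/2, c_f, 1/2 + c_f`,
`c_u = 1 - 6/((n+2)(n+3))` and `c_v = 1 - 6/((n+3)(n+4))`. For `n ≥ 2` the norms of `e` and
`f` are attained by no other idempotent (at `n = 1`, `u` has the norm of `e` and `v` that of
`f`), so `g` fixes `e` and `f`. Then `g x` lies in the `1/2`-eigenspace `ℂx` of `e·`, and
`x·x = g x · g x` forces `g x = ±x`.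
-/

section

variable {n : ℕ}

theorem sum_coord_smul_Bbasis (a : Fin 3 → ℂ) : a 0 • Be + a 1 • Bf + a 2 • Bx = a := by
  ext i; fin_cases i <;> simp [Be, Bf, Bx]

theorem IsLinearMap.eq_of_Bbasis {g h : (Fin 3 → ℂ) → (Fin 3 → ℂ)} (hg : IsLinearMap ℂ g)
    (hh : IsLinearMap ℂ h) (he : g Be = h Be) (hf : g Bf = h Bf) (hx : g Bx = h Bx) : g = h := by
  ext1 a
  rw [← sum_coord_smul_Bbasis a, hg.map_add, hg.map_add, hh.map_add, hh.map_add, hg.map_smul,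
    hg.map_smul, hg.map_smul, hh.map_smul, hh.map_smul, hh.map_smul, he, hf, hx]

theorem Bmul_Be_self : Bmul n Be Be = (2 : ℂ) • Be := by
  ext i; fin_cases i <;> simp [Bmul, Be]

theorem Bmul_Bf_self : Bmul n Bf Bf = (2 : ℂ) • Bf := by
  ext i; fin_cases i <;> simp [Bmul, Bf]

theorem Bmul_Be_Bx : Bmul n Be Bx = (1 / 2 : ℂ) • Bx := by
  ext i; fin_cases i <;> simp [Bmul, Be, Bx]

theorem Bmul_Bx_self :
    Bmul n Bx Bx = (2 * n * (n + 6) : ℂ) • Be + (2 * (n + 2) * (n + 4) : ℂ) • Bf := by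
  ext i; fin_cases i <;> simp [Bmul, Be, Bf, Bx]

theorem isLinearMap_Bsigma : IsLinearMap ℂ Bsigma :=
  ⟨fun a b => by ext i; fin_cases i <;> simp [Bsigma]; ring,
    fun c a => by ext i; fin_cases i <;> simp [Bsigma]⟩

theorem Bsigma_involutive : Function.Involutive Bsigma := by
  intro a; ext i; fin_cases i <;> simp [Bsigma]

theorem Bsigma_Bmul (a b : Fin 3 → ℂ) : Bsigma (Bmul n a b) = Bmul n (Bsigma a) (Bsigma b) := by
  ext i; fin_cases i <;> simp [Bmul, Bsigma]; ring

theorem Bform_Bsigma (a b : Fin 3 → ℂ) : Bform n (Bsigma a) (Bsigma b) = Bform n a b := by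
  simp [Bform, Bsigma]

theorem Bsigma_Be : Bsigma Be = Be := by
  ext i; fin_cases i <;> simp [Bsigma, Be]

theorem Bsigma_Bf : Bsigma Bf = Bf := by
  ext i; fin_cases i <;> simp [Bsigma, Bf]

theorem Bsigma_Bx : Bsigma Bx = -Bx := by
  ext i; fin_cases i <;> simp [Bsigma, Bx]

theorem smul_Bu : (2 * (n + 3) : ℂ) • Bu n = ![(n : ℂ), n + 4, 1] := by
  have h3 : (n : ℂ) + 3 ≠ 0 := by norm_cast
  ext i; fin_cases i <;> simp [Bu, Be, Bf, Bx] <;> field_simp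

theorem smul_Bv : (2 * (n + 3) : ℂ) • Bv n = ![(n : ℂ) + 6, n + 2, -1] := by
  have h3 : (n : ℂ) + 3 ≠ 0 := by norm_cast
  ext i; fin_cases i <;> simp [Bv, Bu, Be, Bf, Bx] <;> field_simp <;> ring

theorem Bform_zero_self : Bform n 0 0 = 0 := by
  simp [Bform]

theorem Bform_Be_self : Bform n Be Be = 1 / 4 := by
  simp [Bform, Be]

theorem Bform_Bf_self : Bform n Bf Bf = 3 * n * (n + 6) / (4 * (n + 2) * (n + 4)) := by
  have h2 : (n : ℂ) + 2 ≠ 0 := by norm_cast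
  have h4 : (n : ℂ) + 4 ≠ 0 := by norm_cast
  simp [Bform, Bf]
  field_simp
  ring

theorem Bform_Be_add_Bf_self : Bform n (Be + Bf) (Be + Bf) = Bform n Be Be + Bform n Bf Bf := by
  simp [Bform, Be, Bf]

theorem Bform_Bu_self : Bform n (Bu n) (Bu n) = n * (n + 5) / (2 * (n + 2) * (n + 3)) := by
  have h2 : (n : ℂ) + 2 ≠ 0 := by norm_cast
  have h3 : (n : ℂ) + 3 ≠ 0 := by norm_cast
  have h4 : (n : ℂ) + 4 ≠ 0 := by norm_cast
  simp [Bform, Bu, Be, Bf, Bx]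
  field_simp
  ring

theorem Bform_Bv_self : Bform n (Bv n) (Bv n) = (n + 1) * (n + 6) / (2 * (n + 3) * (n + 4)) := by
  have h2 : (n : ℂ) + 2 ≠ 0 := by norm_cast
  have h3 : (n : ℂ) + 3 ≠ 0 := by norm_cast
  have h4 : (n : ℂ) + 4 ≠ 0 := by norm_cast
  simp [Bform, Bv, Bu, Be, Bf, Bx]
  field_simp
  ring

theorem coord_eqs_of_Bmul_self {a : Fin 3 → ℂ} (h : Bmul n a a = (2 : ℂ) • a) :
    a 0 ^ 2 + n * (n + 6) * a 2 ^ 2 = a 0 ∧ a 1 ^ 2 + (n + 2) * (n + 4) * a 2 ^ 2 = a 1 ∧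
      a 2 * (a 0 + 3 * a 1 - 2) = 0 := by
  have h0 := congrFun h 0
  have h1 := congrFun h 1
  have h2 := congrFun h 2
  simp [Bmul] at h0 h1 h2
  exact ⟨by linear_combination h0 / 2, by linear_combination h1 / 2, by linear_combination h2⟩

theorem Bmul_self_cases_of_coord_two_eq_zero {a : Fin 3 → ℂ} (h : Bmul n a a = (2 : ℂ) • a)
    (ha : a 2 = 0) : a = 0 ∨ a = Be ∨ a = Bf ∨ a = Be + Bf := by
  obtain ⟨h0, h1, -⟩ := coord_eqs_of_Bmul_self h
  rw [ha] at h0 h1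
  have ha' : a = ![a 0, a 1, 0] := by ext i; fin_cases i <;> simp [ha]
  rcases IsIdempotentElem.iff_eq_zero_or_one.mp (by simpa [IsIdempotentElem, sq] using h0)
    with h0 | h0 <;>
  rcases IsIdempotentElem.iff_eq_zero_or_one.mp (by simpa [IsIdempotentElem, sq] using h1)
    with h1 | h1 <;>
  rw [ha', h0, h1] <;> simp [Be, Bf, funext_iff, Fin.forall_fin_succ]

theorem Bmul_self_cases_of_coord_two_ne_zero {a : Fin 3 → ℂ} (h : Bmul n a a = (2 : ℂ) • a)
    (ha : a 2 ≠ 0) : a = Bu n ∨ a = Bv n ∨ a = Bsigma (Bu n) ∨ a = Bsigma (Bv n) := by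
  obtain ⟨h0, h1, h2⟩ := coord_eqs_of_Bmul_self h
  have h3 : a 0 = 2 - 3 * a 1 := by
    linear_combination (mul_eq_zero.mp h2).resolve_left ha
  have hs : 4 * ((n : ℂ) + 3) ^ 2 * a 2 ^ 2 = 1 := by
    linear_combination (9 * h1 - h0 - (1 - a 0 - (2 - 3 * a 1)) * h3) / 2
  have hx : (2 * (n + 3) * a 2 - 1) * (2 * (n + 3) * a 2 + 1) = 0 := by
    linear_combination hs
  have hf : (2 * (n + 3) * a 1 - (n + 4)) * (2 * (n + 3) * a 1 - (n + 2)) = 0 := by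
    linear_combination 4 * ((n : ℂ) + 3) ^ 2 * h1 - (n + 2) * (n + 4) * hs
  have hd : 2 * ((n : ℂ) + 3) ≠ 0 := mul_ne_zero two_ne_zero (by norm_cast)
  simp only [← smul_right_inj hd (m₁ := a), ← isLinearMap_Bsigma.map_smul, smul_Bu, smul_Bv]
  rcases mul_eq_zero.mp hf with hf | hf <;> rcases mul_eq_zero.mp hx with hx | hx
  on_goal 1 => left
  on_goal 2 => right; right; left
  on_goal 3 => right; right; right
  on_goal 4 => right; left
  all_goals
    ext i; fin_cases i <;> simp [Bsigma]
    · linear_combination (2 * (n + 3) : ℂ) * h3 - 3 * hf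
    · linear_combination hf
    · linear_combination hx

theorem Bmul_self_cases {a : Fin 3 → ℂ} (h : Bmul n a a = (2 : ℂ) • a) :
    a = 0 ∨ a = Be ∨ a = Bf ∨ a = Be + Bf ∨
      a = Bu n ∨ a = Bv n ∨ a = Bsigma (Bu n) ∨ a = Bsigma (Bv n) := by
  by_cases ha : a 2 = 0
  · rcases Bmul_self_cases_of_coord_two_eq_zero h ha with h | h | h | h <;> simp [h]
  · rcases Bmul_self_cases_of_coord_two_ne_zero h ha with h | h | h | h <;> simp [h]

theorem eq_of_Bmul_self_of_Bform_self (hn : 2 ≤ n) {a b : Fin 3 → ℂ} (hb : b = Be ∨ b = Bf)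
    (h : Bmul n a a = (2 : ℂ) • a) (hf : Bform n a a = Bform n b b) : a = b := by
  have h2 : (n : ℂ) + 2 ≠ 0 := by norm_cast
  have h3 : (n : ℂ) + 3 ≠ 0 := by norm_cast
  have h4 : (n : ℂ) + 4 ≠ 0 := by norm_cast
  rcases hb with rfl | rfl <;>
  rcases Bmul_self_cases h with rfl | rfl | rfl | rfl | rfl | rfl | rfl | rfl <;>
    simp only [Bform_zero_self, Bform_Bsigma, Bform_Be_self, Bform_Bu_self, Bform_Bv_self,
      Bform_Be_add_Bf_self, Bform_Bf_self] at hf ⊢ <;>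
    field_simp at hf <;> norm_cast at hf <;>
    nlinarith [pow_pos (show 0 < n by omega) 3, pow_pos (show 0 < n by omega) 2]

theorem eq_smul_Bx_of_Bmul_Be {a : Fin 3 → ℂ} (h : Bmul n Be a = (1 / 2 : ℂ) • a) :
    a = a 2 • Bx := by
  have h0 := congrFun h 0
  have h1 := congrFun h 1
  simp [Bmul, Be] at h0 h1
  norm_num at h0
  ext i; fin_cases i <;> simp [Bx, h0, h1]

theorem eq_one_or_eq_neg_one_of_Bmul_smul_Bx (hn : n ≠ 0) {c : ℂ}
    (h : Bmul n (c • Bx) (c • Bx) = Bmul n Bx Bx) : c = 1 ∨ c = -1 := by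
  have h0 := congrFun h 0
  simp [Bmul, Bx] at h0
  have hN : (n : ℂ) * (n + 6) ≠ 0 := mul_ne_zero (by exact_mod_cast hn) (by norm_cast)
  have : (c - 1) * (c + 1) = 0 := by
    apply mul_left_cancel₀ hN
    linear_combination h0 / 2
  rcases mul_eq_zero.mp this with h | h
  · exact .inl (by linear_combination h)
  · exact .inr (by linear_combination h)

end

theorem stmt_10 (n : ℕ) (hn : 2 ≤ n) :
    {g : (Fin 3 → ℂ) → (Fin 3 → ℂ) |
        IsLinearMap ℂ g ∧ Function.Bijective g ∧
        (∀ a b, g (Bmul n a b) = Bmul n (g a) (g b)) ∧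
        (∀ a b, Bform n (g a) (g b) = Bform n a b)}
      = {id, Bsigma} := by
  ext g
  simp only [Set.mem_insert_iff, Set.mem_singleton_iff]
  constructor
  · rintro ⟨hlin, -, hmul, hform⟩
    have hidem {a : Fin 3 → ℂ} (h : Bmul n a a = (2 : ℂ) • a) :
        Bmul n (g a) (g a) = (2 : ℂ) • g a := by
      rw [← hmul, h, hlin.map_smul]
    have he : g Be = Be :=
      eq_of_Bmul_self_of_Bform_self hn (.inl rfl) (hidem Bmul_Be_self) (hform _ _)
    have hf : g Bf = Bf :=
      eq_of_Bmul_self_of_Bform_self hn (.inr rfl) (hidem Bmul_Bf_self) (hform _ _)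
    have hx : g Bx = g Bx 2 • Bx :=
      eq_smul_Bx_of_Bmul_Be (by rw [← he, ← hmul, Bmul_Be_Bx, hlin.map_smul])
    have hc : g Bx 2 = 1 ∨ g Bx 2 = -1 := by
      refine eq_one_or_eq_neg_one_of_Bmul_smul_Bx (n := n) (by omega) ?_
      rw [← hx, ← hmul, Bmul_Bx_self, hlin.map_add, hlin.map_smul, hlin.map_smul, he, hf]
    rcases hc with hc | hc
    · refine .inl (hlin.eq_of_Bbasis LinearMap.id.isLinear he hf ?_)
      rw [hx, hc, one_smul, id]
    · refine .inr (hlin.eq_of_Bbasis isLinearMap_Bsigma (he.trans Bsigma_Be.symm)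
        (hf.trans Bsigma_Bf.symm) ?_)
      rw [hx, hc, Bsigma_Bx, neg_one_smul]
  · rintro (rfl | rfl)
    · exact ⟨LinearMap.id.isLinear, Function.bijective_id, fun _ _ => rfl, fun _ _ => rfl⟩
    · exact ⟨isLinearMap_Bsigma, Bsigma_involutive.bijective, Bsigma_Bmul, Bform_Bsigma⟩
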